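/- arXiv:2509.08096 — 2 statements merged into one kernel-verified Lean document; each statement's English description precedes it below -/
import Mathlib

section
/- In the simple jump diffusion model, the difference between the variance swap rate and the squared VIX equals 2λ(1 + J + J²/2 − e^J); using the power series of e^J, this equals −2λ·Σ_{k≥3} J^k/k!, so its third-order Taylor approximation in J is −λJ³/3. -/
open Real Filter Topology Finset Nat

theorem exp_eq_sum_range_add_tsum (n : ℕ) (x : ℝ) :
    exp x = ∑ i ∈ range n, x ^ i / (i ! : ℝ) + ∑' k : ℕ, x ^ (k + n) / ((k + n) ! : ℝ) := by
  rw [Summable.sum_add_tsum_nat_add n (Real.summable_pow_div_factorial x), Real.exp_eq_exp_ℝ,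
    NormedSpace.exp_eq_tsum_div]

theorem sum_range_three_pow_div_factorial (x : ℝ) :
    ∑ i ∈ range 3, x ^ i / (i ! : ℝ) = 1 + x + x ^ 2 / 2 := by
  norm_num [Finset.sum_range_succ, Nat.factorial]

theorem tendsto_exp_sub_sum_range_div_pow (n : ℕ) :
    Tendsto (fun x : ℝ => (exp x - ∑ i ∈ range n, x ^ i / (i ! : ℝ)) / x ^ n) (𝓝[≠] 0)
      (𝓝 (1 / (n ! : ℝ))) := by
  have remainder_div : Tendsto (fun x : ℝ => (exp x - ∑ i ∈ range (n + 1), x ^ i / (i ! : ℝ)) / x ^ n)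
      (𝓝[≠] 0) (𝓝 0) :=
    (exp_sub_sum_range_succ_isLittleO_pow n).tendsto_div_nhds_zero.mono_left nhdsWithin_le_nhds
  have split : ∀ᶠ x in 𝓝[≠] (0 : ℝ), (exp x - ∑ i ∈ range (n + 1), x ^ i / (i ! : ℝ)) / x ^ n
      + 1 / (n ! : ℝ) = (exp x - ∑ i ∈ range n, x ^ i / (i ! : ℝ)) / x ^ n := by
    filter_upwards [self_mem_nhdsWithin] with x (hx : x ≠ 0)
    rw [Finset.sum_range_succ]
    field_simp
    ring
  simpa using (remainder_div.add_const (1 / (n ! : ℝ))).congr' split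

/-- In the simple jump diffusion, the difference between the variance swap
rate `σ² + λJ²` and the squared VIX `σ² − 2λ(1 + J − e^J)` equals
`2λ(1 + J + J²/2 − e^J)`; by the power series of `e^J` this equals
`−2λ·Σ_{k≥3} J^k/k!`, and its third-order Taylor approximation in `J` is `−λJ³/3`
(i.e. `2λ(1+J+J²/2−e^J)/J³ → −λ/3` as `J → 0`). -/
theorem sjd_vs_vix_gap (σ lam : ℝ) :
    (∀ J : ℝ,
      (σ ^ 2 + lam * J ^ 2) - (σ ^ 2 - 2 * lam * (1 + J - exp J)) =
        2 * lam * (1 + J + J ^ 2 / 2 - exp J)) ∧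
    (∀ J : ℝ,
      2 * lam * (1 + J + J ^ 2 / 2 - exp J) =
        -2 * lam * ∑' k : ℕ, J ^ (k + 3) / (Nat.factorial (k + 3) : ℝ)) ∧
    Tendsto (fun J : ℝ => 2 * lam * (1 + J + J ^ 2 / 2 - exp J) / J ^ 3)
      (nhdsWithin 0 {0}ᶜ) (nhds (-lam / 3)) := by
  refine ⟨fun J => by ring, fun J => ?_, ?_⟩
  · rw [exp_eq_sum_range_add_tsum 3, sum_range_three_pow_div_factorial]
    ring
  · have gap_eq (J : ℝ) : 2 * lam * (1 + J + J ^ 2 / 2 - exp J) / J ^ 3 =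
        -2 * lam * ((exp J - ∑ i ∈ range 3, J ^ i / (i ! : ℝ)) / J ^ 3) := by
      rw [sum_range_three_pow_div_factorial]
      ring
    simp_rw [gap_eq]
    convert (tendsto_exp_sub_sum_range_div_pow 3).const_mul (-2 * lam) using 2
    norm_num [Nat.factorial]
    ring
end

section
/- For μ > −1, log(1+μ) − μ ≤ 0 with equality iff μ = 0; hence in the Bates model with λ > 0 and σ_J = 0, the sign of VS(τ) − VIX²(τ) = 2λ(log(1+μ_J) − μ_J + (1/2)log²(1+μ_J)) is determined by the function g(μ) = log(1+μ) − μ + (1/2)log²(1+μ), which satisfies g(μ) > 0 for −1 < μ < 0 and g(μ) < 0 for μ > 0. -/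
open Real

/-!
Substituting `x = log (1 + μ)` turns `g(μ)` into `1 + x + x²/2 - eˣ`. Its sign is opposite to that
of `x`, i.e. of `μ`, because `eˣ - (1 + x + x²/2)` vanishes at `0` and is strictly increasing: its
derivative `eˣ - (1 + x)` is positive away from `0`.
-/

theorem strictMono_of_hasDerivAt_pos_of_ne {f f' : ℝ → ℝ} (a : ℝ)
    (hf : ∀ x, HasDerivAt f (f' x) x) (hf' : ∀ x ≠ a, 0 < f' x) : StrictMono f := by
  have hcont : Continuous f := continuous_iff_continuousAt.2 fun x ↦ (hf x).continuousAt
  refine StrictMonoOn.Iic_union_Ici (a := a) ?_ ?_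
  · refine strictMonoOn_of_hasDerivWithinAt_pos (convex_Iic a) hcont.continuousOn
      (fun x _ ↦ (hf x).hasDerivWithinAt) fun x hx ↦ hf' x ?_
    rw [interior_Iic] at hx
    exact hx.ne
  · refine strictMonoOn_of_hasDerivWithinAt_pos (convex_Ici a) hcont.continuousOn
      (fun x _ ↦ (hf x).hasDerivWithinAt) fun x hx ↦ hf' x ?_
    rw [interior_Ici] at hx
    exact hx.ne'

theorem hasDerivAt_exp_sub_quadratic (x : ℝ) :
    HasDerivAt (fun y ↦ exp y - (1 + y + y ^ 2 / 2)) (exp x - (1 + x)) x := by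
  refine ((hasDerivAt_exp x).sub (((hasDerivAt_id' x).const_add 1).add
    (((hasDerivAt_id' x).pow 2).div_const 2))).congr_deriv ?_
  norm_num

theorem strictMono_exp_sub_quadratic : StrictMono fun x : ℝ ↦ exp x - (1 + x + x ^ 2 / 2) :=
  strictMono_of_hasDerivAt_pos_of_ne 0 hasDerivAt_exp_sub_quadratic fun x hx ↦ by
    linarith [add_one_lt_exp hx]

theorem quadratic_lt_exp_of_pos {x : ℝ} (hx : 0 < x) : 1 + x + x ^ 2 / 2 < exp x := by
  simpa using strictMono_exp_sub_quadratic hx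

theorem exp_lt_quadratic_of_neg {x : ℝ} (hx : x < 0) : exp x < 1 + x + x ^ 2 / 2 := by
  simpa using strictMono_exp_sub_quadratic hx

theorem log_one_add_sub_add_half_sq_log {μ : ℝ} (hμ : -1 < μ) :
    log (1 + μ) - μ + 1 / 2 * log (1 + μ) ^ 2 =
      1 + log (1 + μ) + log (1 + μ) ^ 2 / 2 - exp (log (1 + μ)) := by
  rw [exp_log (by linarith)]
  ring

/-- For `μ > −1`, `log(1+μ) − μ ≤ 0` with equality iff `μ = 0`; and the
function `g(μ) = log(1+μ) − μ + (1/2)log²(1+μ)`, which determines the sign of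
`VS(τ) − VIX²(τ) = 2λ·g(μ_J)` in the Bates model with deterministic jumps, satisfies
`g(μ) > 0` for `−1 < μ < 0` and `g(μ) < 0` for `μ > 0`. -/
theorem bates_deterministic_jump_gap_sign :
    (∀ μ : ℝ, -1 < μ → Real.log (1 + μ) - μ ≤ 0) ∧
    (∀ μ : ℝ, -1 < μ → (Real.log (1 + μ) - μ = 0 ↔ μ = 0)) ∧
    (∀ μ : ℝ, -1 < μ → μ < 0 →
      0 < Real.log (1 + μ) - μ + (1 / 2) * (Real.log (1 + μ)) ^ 2) ∧
    (∀ μ : ℝ, 0 < μ →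
      Real.log (1 + μ) - μ + (1 / 2) * (Real.log (1 + μ)) ^ 2 < 0) := by
  refine ⟨fun μ hμ ↦ ?_, fun μ hμ ↦ ⟨fun h ↦ ?_, fun h ↦ by simp [h]⟩, fun μ hμ hμ0 ↦ ?_,
    fun μ hμ ↦ ?_⟩
  · linarith [log_le_sub_one_of_pos (x := 1 + μ) (by linarith)]
  · by_contra hne
    have := log_lt_sub_one_of_pos (x := 1 + μ) (by linarith) (by simpa using hne)
    linarith
  · have hx : log (1 + μ) < 0 := log_neg (by linarith) (by linarith)
    rw [log_one_add_sub_add_half_sq_log hμ]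
    linarith [exp_lt_quadratic_of_neg hx]
  · have hx : 0 < log (1 + μ) := log_pos (by linarith)
    rw [log_one_add_sub_add_half_sq_log (by linarith)]
    linarith [quadratic_lt_exp_of_pos hx]
end
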